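/- arXiv:0904.2061 — 2 statements merged into one kernel-verified Lean document; each statement's English description precedes it below -/
import Mathlib

section
/- For every rational partition π of an instance of selfish bin covering, there exists an M-SNE partition π' of the same instance with p(π') ≥ p(π). -/
/-!
If a rational partition is not an M-SNE, some covered bin `Bᵢ` contains a set `E` such that
`B_m ∪ E` is minimal covered and `s(Bᵢ \ E) > s(B_m)`. Moving `E` from `Bᵢ` into `B_m` keeps the
partition rational and its welfare unchanged: `B_m ∪ E` is covered, while `Bᵢ \ E` is not, by
minimality of `Bᵢ`, and becomes the new uncovered bin. So the size of the uncovered bin strictly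
increases; as it is bounded by the total size of all items, iterating the move ends in an M-SNE.
-/

open Finset

/-- Total size of the items in a bin. -/
def binSize {n : ℕ} (a : Fin n → ℕ) (B : Finset (Fin n)) : ℕ := ∑ j ∈ B, a j

/-- The social welfare of a partition: the number of covered bins. -/
def welfare {n : ℕ} (a : Fin n → ℕ) (b : ℕ)
    (π : Finpartition (univ : Finset (Fin n))) : ℕ :=
  (π.parts.filter fun B => b ≤ binSize a B).card

/-- The payoff of item `j` when it lies in bin `B`. -/
def payoffIn {n : ℕ} (a : Fin n → ℕ) (b : ℕ) (j : Fin n) (B : Finset (Fin n)) : ℚ :=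
  if b ≤ binSize a B then (a j : ℚ) / (binSize a B : ℚ) else 0

/-- Nash equilibrium. -/
def IsNE {n : ℕ} (a : Fin n → ℕ) (b : ℕ)
    (π : Finpartition (univ : Finset (Fin n))) : Prop :=
  (∀ j : Fin n, ∀ B ∈ π.parts, j ∉ B →
      payoffIn a b j (insert j B) ≤ payoffIn a b j (π.part j)) ∧
  ∀ j : Fin n, payoffIn a b j {j} ≤ payoffIn a b j (π.part j)

/-- A partition is reasonable if at most one bin is uncovered. -/
def Reasonable {n : ℕ} (a : Fin n → ℕ) (b : ℕ)
    (π : Finpartition (univ : Finset (Fin n))) : Prop :=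
  (π.parts.filter fun B => binSize a B < b).card ≤ 1

/-- A bin is minimal covered if it is covered and removing any member uncovers it. -/
def MinimalCovered {n : ℕ} (a : Fin n → ℕ) (b : ℕ) (B : Finset (Fin n)) : Prop :=
  b ≤ binSize a B ∧ ∀ j ∈ B, binSize a (B.erase j) < b

/-- A partition is rational if it is reasonable and every covered bin is minimal covered. -/
def RationalPartition {n : ℕ} (a : Fin n → ℕ) (b : ℕ)
    (π : Finpartition (univ : Finset (Fin n))) : Prop :=
  Reasonable a b π ∧ ∀ B ∈ π.parts, b ≤ binSize a B → MinimalCovered a b B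

/-- `B_m(π)`: the unique uncovered bin of a (rational) partition if one exists, `∅` otherwise. -/
def uncoveredBin {n : ℕ} (a : Fin n → ℕ) (b : ℕ)
    (π : Finpartition (univ : Finset (Fin n))) : Finset (Fin n) :=
  (π.parts.filter fun B => binSize a B < b).sup id

/-- `δ(B) = s(B)` if `B` is covered, `+∞` otherwise. -/
def delta {n : ℕ} (a : Fin n → ℕ) (b : ℕ) (B : Finset (Fin n)) : ℕ∞ :=
  if b ≤ binSize a B then (binSize a B : ℕ∞) else ⊤

/-- Fireable Nash equilibrium of type (I). -/
def IsFNE1 {n : ℕ} (a : Fin n → ℕ) (b : ℕ)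
    (π : Finpartition (univ : Finset (Fin n))) : Prop :=
  RationalPartition a b π ∧
  ¬ ∃ j : Fin n, b ≤ binSize a (π.part j) ∧
      MinimalCovered a b (insert j (uncoveredBin a b π)) ∧
      binSize a (uncoveredBin a b π) + a j < binSize a (π.part j)

/-- Fireable Nash equilibrium of type (II). -/
def IsFNE2 {n : ℕ} (a : Fin n → ℕ) (b : ℕ)
    (π : Finpartition (univ : Finset (Fin n))) : Prop :=
  RationalPartition a b π ∧
  ¬ ∃ (j : Fin n) (E : Finset (Fin n)), b ≤ binSize a (π.part j) ∧
      E ⊆ uncoveredBin a b π ∧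
      MinimalCovered a b (insert j (uncoveredBin a b π \ E)) ∧
      binSize a (uncoveredBin a b π \ E) + a j < binSize a (π.part j)

/-- Fireable Nash equilibrium of type (III). -/
def IsFNE3 {n : ℕ} (a : Fin n → ℕ) (b : ℕ)
    (π : Finpartition (univ : Finset (Fin n))) : Prop :=
  RationalPartition a b π ∧
  ¬ ∃ (j : Fin n) (Bi E : Finset (Fin n)), Bi ∈ π.parts ∧ j ∉ Bi ∧ E ⊆ Bi ∧
      MinimalCovered a b (insert j (Bi \ E)) ∧
      ((binSize a (Bi \ E) + a j : ℕ) : ℕ∞) < min (delta a b Bi) (delta a b (π.part j))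

/-- Modified strong Nash equilibrium. -/
def IsMSNE {n : ℕ} (a : Fin n → ℕ) (b : ℕ)
    (π : Finpartition (univ : Finset (Fin n))) : Prop :=
  RationalPartition a b π ∧
  ¬ ∃ (Bi E : Finset (Fin n)), Bi ∈ π.parts ∧ b ≤ binSize a Bi ∧ E ⊆ Bi ∧
      binSize a (uncoveredBin a b π) < binSize a (Bi \ E) ∧
      MinimalCovered a b (uncoveredBin a b π ∪ E)

/-- Strong Nash equilibrium. -/
def IsSNE {n : ℕ} (a : Fin n → ℕ) (b : ℕ)
    (π : Finpartition (univ : Finset (Fin n))) : Prop :=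
  ¬ ∃ B : Finset (Fin n), b ≤ binSize a B ∧
      ∀ j ∈ B, binSize a (π.part j) < b ∨ binSize a B < binSize a (π.part j)

/-- `F` is a minimum subset w.r.t. `(E, b)`. -/
def IsMinSubset {n : ℕ} (a : Fin n → ℕ) (b : ℕ) (F E : Finset (Fin n)) : Prop :=
  F ⊆ E ∧ b ≤ binSize a F ∧ ∀ G ⊆ E, b ≤ binSize a G → binSize a F ≤ binSize a G

namespace Finpartition

variable {α : Type*} [DistribLattice α] [OrderBot α] [DecidableEq α] {a : α}

lemma disjoint_sup_of_mem_sdiff (P : Finpartition a) {Q : Finset α} {u : α}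
    (hu : u ∈ P.parts \ Q) (hQ : Q ⊆ P.parts) : Disjoint u (Q.sup id) := by
  rw [Finset.mem_sdiff] at hu
  exact Finset.disjoint_sup_right.2 fun q hq ↦
    P.disjoint hu.1 (hQ hq) (ne_of_mem_of_not_mem hq hu.2).symm

@[simps]
def replaceParts (P : Finpartition a) {Q Q' : Finset α} (hQ : Q ⊆ P.parts)
    (hQ' : (Q' : Set α).PairwiseDisjoint id) (hbot : ⊥ ∉ Q') (hsup : Q'.sup id = Q.sup id) :
    Finpartition a where
  parts := P.parts \ Q ∪ Q'
  supIndep := by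
    rw [Finset.supIndep_iff_pairwiseDisjoint, Finset.coe_union]
    refine (P.supIndep.pairwiseDisjoint.subset ?_).union hQ' fun u hu v hv _ ↦ ?_
    · simp
    · exact (P.disjoint_sup_of_mem_sdiff hu hQ).mono_right (hsup ▸ Finset.le_sup (f := id) hv)
  sup_parts := by
    rw [Finset.sup_union, hsup, ← Finset.sup_union, Finset.sdiff_union_of_subset hQ, P.sup_parts]
  bot_notMem := by
    simp only [Finset.mem_union, Finset.mem_sdiff, not_or]
    exact ⟨fun h ↦ P.bot_notMem h.1, hbot⟩

lemma disjoint_sdiff_replaceParts (P : Finpartition a) {Q Q' : Finset α} (hQ : Q ⊆ P.parts)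
    (hbot : ⊥ ∉ Q') (hsup : Q'.sup id = Q.sup id) : Disjoint (P.parts \ Q) Q' := by
  refine Finset.disjoint_left.2 fun v hv hv' ↦ hbot ?_
  have hle : v ≤ Q.sup id := hsup ▸ Finset.le_sup (f := id) hv'
  rwa [← (P.disjoint_sup_of_mem_sdiff hv hQ).eq_bot_of_le hle]

lemma card_filter_replaceParts (P : Finpartition a) {Q Q' : Finset α} (hQ : Q ⊆ P.parts)
    (hQ' : (Q' : Set α).PairwiseDisjoint id) (hbot : ⊥ ∉ Q') (hsup : Q'.sup id = Q.sup id)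
    (p : α → Prop) [DecidablePred p] :
    ((P.replaceParts hQ hQ' hbot hsup).parts.filter p).card + (Q.filter p).card =
      (P.parts.filter p).card + (Q'.filter p).card := by
  conv_rhs => rw [← Finset.sdiff_union_of_subset hQ]
  rw [Finpartition.replaceParts_parts, filter_union, filter_union,
    card_union_of_disjoint (disjoint_filter_filter (P.disjoint_sdiff_replaceParts hQ hbot hsup)),
    card_union_of_disjoint (disjoint_filter_filter sdiff_disjoint)]
  ring

end Finpartition

variable {n : ℕ} {a : Fin n → ℕ} {b : ℕ}

lemma binSize_mono {B C : Finset (Fin n)} (h : B ⊆ C) : binSize a B ≤ binSize a C :=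
  sum_le_sum_of_subset h

lemma MinimalCovered.pos {B : Finset (Fin n)} (hB : MinimalCovered a b B) (hne : B.Nonempty) :
    0 < b := by
  obtain ⟨j, hj⟩ := hne
  exact (Nat.zero_le _).trans_lt (hB.2 j hj)

lemma MinimalCovered.binSize_sdiff_lt {B E : Finset (Fin n)} (hB : MinimalCovered a b B)
    (hE : E ⊆ B) (hne : E.Nonempty) : binSize a (B \ E) < b := by
  obtain ⟨j, hj⟩ := hne
  exact (binSize_mono fun x hx ↦ by grind).trans_lt (hB.2 j (hE hj))

lemma Reasonable.binSize_uncoveredBin_lt {π : Finpartition (univ : Finset (Fin n))}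
    (hπ : Reasonable a b π) (hb : 0 < b) : binSize a (uncoveredBin a b π) < b := by
  obtain ⟨U, hU⟩ := card_le_one_iff_subset_singleton.1 hπ
  obtain h | h := subset_singleton_iff.1 hU
  · rw [uncoveredBin, h]
    simpa [binSize] using hb
  · have hU : U ∈ π.parts.filter fun B => binSize a B < b := h ▸ mem_singleton_self U
    simpa [uncoveredBin, h] using (mem_filter.1 hU).2

lemma disjoint_uncoveredBin {π : Finpartition (univ : Finset (Fin n))} {B : Finset (Fin n)}
    (hB : B ∈ π.parts) (hcov : b ≤ binSize a B) : Disjoint B (uncoveredBin a b π) := by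
  refine Finset.disjoint_sup_right.2 fun C hC ↦ ?_
  rw [mem_filter] at hC
  exact π.disjoint hB hC.1 (by rintro rfl; omega)

/-- Move `E` from `Bi` into the uncovered bin. Since `uncoveredBin` is the union of all uncovered
parts, `Bi` and these parts are replaced by `Bi \ E` and `uncoveredBin a b π ∪ E`. -/
lemma RationalPartition.exists_uncoveredBin_eq_sdiff {π : Finpartition (univ : Finset (Fin n))}
    (hπ : RationalPartition a b π) {Bi E : Finset (Fin n)} (hBi : Bi ∈ π.parts)
    (hcov : b ≤ binSize a Bi) (hE : E ⊆ Bi) (hrest : binSize a (Bi \ E) < b)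
    (hne : (Bi \ E).Nonempty) (hmin : MinimalCovered a b (uncoveredBin a b π ∪ E)) :
    ∃ π' : Finpartition (univ : Finset (Fin n)), RationalPartition a b π' ∧
      welfare a b π' = welfare a b π ∧ uncoveredBin a b π' = Bi \ E := by
  set U := uncoveredBin a b π
  have hb : 0 < b := (hπ.2 Bi hBi hcov).pos (π.nonempty_of_mem_parts hBi)
  have hUE : (U ∪ E).Nonempty := nonempty_iff_ne_empty.2 fun h ↦ by
    have := hmin.1
    simp [h, binSize] at this
    omega
  set Q := insert Bi (π.parts.filter fun B => binSize a B < b)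
  set Q' : Finset (Finset (Fin n)) := {Bi \ E, U ∪ E}
  have hQ : Q ⊆ π.parts := insert_subset hBi (filter_subset _ _)
  have hQ' : (Q' : Set (Finset (Fin n))).PairwiseDisjoint id := by
    have : Disjoint (Bi \ E) (U ∪ E) :=
      disjoint_union_right.2 ⟨(disjoint_uncoveredBin hBi hcov).mono_left sdiff_subset,
        sdiff_disjoint⟩
    rw [coe_pair]
    exact Set.pairwise_pair.2 fun _ ↦ ⟨this, this.symm⟩
  have hbot : ⊥ ∉ Q' := by
    simp only [Q', mem_insert, mem_singleton, not_or]
    exact ⟨hne.ne_empty.symm, hUE.ne_empty.symm⟩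
  have hsup : Q'.sup id = Q.sup id := by
    simp only [Q', Q, sup_insert, sup_singleton, id, U, uncoveredBin]
    grind
  let π' := π.replaceParts hQ hQ' hbot hsup
  have huncov : π'.parts.filter (fun B => binSize a B < b) = {Bi \ E} := by
    have hold : (π.parts \ Q).filter (fun B => binSize a B < b) = ∅ :=
      filter_eq_empty_iff.2 fun B hB hlt ↦
        (mem_sdiff.1 hB).2 (mem_insert_of_mem (mem_filter.2 ⟨(mem_sdiff.1 hB).1, hlt⟩))
    rw [Finpartition.replaceParts_parts, filter_union, hold, empty_union, filter_insert,
      if_pos hrest, filter_singleton, if_neg hmin.1.not_gt]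
    rfl
  refine ⟨π', ⟨?_, ?_⟩, ?_, ?_⟩
  · rw [Reasonable, huncov, card_singleton]
  · intro B hB hBcov
    simp only [π', Finpartition.replaceParts_parts, Q', mem_union, mem_insert, mem_singleton] at hB
    obtain hB | rfl | rfl := hB
    · exact hπ.2 B (mem_sdiff.1 hB).1 hBcov
    · omega
    · exact hmin
  · have hcard := π.card_filter_replaceParts hQ hQ' hbot hsup (fun B => b ≤ binSize a B)
    have hQcov : Q.filter (fun B => b ≤ binSize a B) = {Bi} := by
      rw [filter_insert, if_pos hcov, filter_filter, filter_false_of_mem fun B _ h ↦ by omega]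
      rfl
    rw [hQcov, filter_insert, if_neg hrest.not_ge, filter_singleton, if_pos hmin.1] at hcard
    simp only [card_singleton] at hcard
    exact Nat.add_right_cancel hcard
  · rw [uncoveredBin, huncov, sup_singleton, id]

lemma RationalPartition.exists_binSize_uncoveredBin_lt {π : Finpartition (univ : Finset (Fin n))}
    (hπ : RationalPartition a b π) (hM : ¬ IsMSNE a b π) :
    ∃ π' : Finpartition (univ : Finset (Fin n)), RationalPartition a b π' ∧
      welfare a b π' = welfare a b π ∧
      binSize a (uncoveredBin a b π) < binSize a (uncoveredBin a b π') := by
  obtain ⟨Bi, E, hBi, hcov, hE, hlt, hmin⟩ := not_not.1 fun h ↦ hM ⟨hπ, h⟩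
  have hBi_min := hπ.2 Bi hBi hcov
  have hb : 0 < b := hBi_min.pos (π.nonempty_of_mem_parts hBi)
  have hE_ne : E.Nonempty := nonempty_iff_ne_empty.2 fun h ↦ by
    have := hmin.1
    rw [h, union_empty] at this
    exact (hπ.1.binSize_uncoveredBin_lt hb).not_ge this
  have hrest_ne : (Bi \ E).Nonempty := nonempty_iff_ne_empty.2 fun h ↦ by
    simp [h, binSize] at hlt
  obtain ⟨π', hπ', hw, hU⟩ := hπ.exists_uncoveredBin_eq_sdiff hBi hcov hE
    (hBi_min.binSize_sdiff_lt hE hE_ne) hrest_ne hmin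
  exact ⟨π', hπ', hw, hU ▸ hlt⟩

theorem stmt16_general (n : ℕ) (a : Fin n → ℕ) (b : ℕ)
    (π : Finpartition (univ : Finset (Fin n))) (hπ : RationalPartition a b π) :
    ∃ π' : Finpartition (univ : Finset (Fin n)),
      IsMSNE a b π' ∧ welfare a b π ≤ welfare a b π' := by
  induction hm : binSize a univ - binSize a (uncoveredBin a b π)
    using Nat.strong_induction_on generalizing π with
  | _ m ih =>
    by_cases hM : IsMSNE a b π
    · exact ⟨π, hM, le_rfl⟩
    obtain ⟨π₁, hπ₁, hw, hlt⟩ := hπ.exists_binSize_uncoveredBin_lt hM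
    have hle : binSize a (uncoveredBin a b π₁) ≤ binSize a univ := binSize_mono (subset_univ _)
    obtain ⟨π', hM', hw'⟩ := ih _ (by omega) π₁ hπ₁ rfl
    exact ⟨π', hM', hw ▸ hw'⟩

/-- every rational partition can be turned into an M-SNE without
decreasing the social welfare. -/
theorem stmt16 (n : ℕ) (hn : 1 ≤ n) (a : Fin n → ℕ) (b : ℕ)
    (ha : ∀ j, 0 < a j) (hab : ∀ j, a j < b)
    (π : Finpartition (univ : Finset (Fin n))) (hπ : RationalPartition a b π) :
    ∃ π' : Finpartition (univ : Finset (Fin n)),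
      IsMSNE a b π' ∧ welfare a b π ≤ welfare a b π' :=
  stmt16_general n a b π hπ
end

section
/- For every reasonable partition π of an instance of selfish bin covering that is a strong Nash equilibrium (SNE), OPT ≤ 2·p(π); that is, the price of anarchy with respect to SNE is at least 1/2. -/
/- In a strong Nash equilibrium every covered bin has size below `2b`: otherwise, since items are
smaller than `b`, the bin contains a covering subset of size below `2b`, and its items would all
strictly prefer it. With at most one uncovered bin (of size below `b`), the total size is thus
less than `(2 p(π) + 1) b`, while every covered bin of any partition σ has size at least `b`. -/

open Finset

lemma sum_parts_binSize {n : ℕ} (a : Fin n → ℕ) (π : Finpartition (univ : Finset (Fin n))) :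
    ∑ B ∈ π.parts, binSize a B = ∑ j, a j := by
  have h := sum_biUnion (f := a) π.supIndep.pairwiseDisjoint
  rw [π.biUnion_parts] at h
  exact h.symm

lemma exists_subset_le_binSize_lt_two_mul {n : ℕ} {a : Fin n → ℕ} {b : ℕ} (hb : 0 < b)
    (hab : ∀ j, a j < b) (C : Finset (Fin n)) (hC : b ≤ binSize a C) :
    ∃ D ⊆ C, b ≤ binSize a D ∧ binSize a D < 2 * b := by
  induction C using Finset.induction_on with
  | empty => simp [binSize] at hC; omega
  | insert j C hj ih =>
    by_cases hsmall : binSize a (insert j C) < 2 * b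
    · exact ⟨insert j C, subset_rfl, hC, hsmall⟩
    · have hsplit : binSize a (insert j C) = a j + binSize a C := sum_insert hj
      obtain ⟨D, hDC, hD⟩ := ih (by have := hab j; omega)
      exact ⟨D, hDC.trans (subset_insert j C), hD⟩

lemma IsSNE.binSize_lt_two_mul {n : ℕ} {a : Fin n → ℕ} {b : ℕ}
    {π : Finpartition (univ : Finset (Fin n))} (hsne : IsSNE a b π) (hab : ∀ j, a j < b)
    {B : Finset (Fin n)} (hB : B ∈ π.parts) (hcov : b ≤ binSize a B) :
    binSize a B < 2 * b := by
  obtain ⟨j, -⟩ := π.nonempty_of_mem_parts hB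
  obtain ⟨D, hDB, hDcov, hDlt⟩ :=
    exists_subset_le_binSize_lt_two_mul ((Nat.zero_le _).trans_lt (hab j)) hab B hcov
  by_contra! hbig
  refine hsne ⟨D, hDcov, fun k hk => Or.inr ?_⟩
  rw [π.part_eq_of_mem hB (hDB hk)]
  omega

lemma mul_welfare_le_sum {n : ℕ} (a : Fin n → ℕ) (b : ℕ)
    (σ : Finpartition (univ : Finset (Fin n))) :
    welfare a b σ * b ≤ ∑ j, a j :=
  calc welfare a b σ * b
      ≤ ∑ B ∈ σ.parts with b ≤ binSize a B, binSize a B :=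
        card_nsmul_le_sum _ _ _ fun _ hB => (mem_filter.mp hB).2
    _ ≤ ∑ B ∈ σ.parts, binSize a B := sum_le_sum_of_subset (filter_subset _ _)
    _ = ∑ j, a j := sum_parts_binSize a σ

lemma Reasonable.sum_lt {n : ℕ} {a : Fin n → ℕ} {b : ℕ}
    {π : Finpartition (univ : Finset (Fin n))} (hres : Reasonable a b π) (hn : 1 ≤ n)
    (hcov : ∀ B ∈ π.parts, b ≤ binSize a B → binSize a B < 2 * b) :
    ∑ j, a j < (2 * welfare a b π + 1) * b := by
  have hparts : π.parts.Nonempty :=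
    π.parts_nonempty (univ_nonempty_iff.mpr ⟨⟨0, hn⟩⟩).ne_empty
  have hunc : #{B ∈ π.parts | binSize a B < b} * b ≤ b := by
    simpa using Nat.mul_le_mul_right b hres
  calc ∑ j, a j = ∑ B ∈ π.parts, binSize a B := (sum_parts_binSize a π).symm
    _ < ∑ B ∈ π.parts, if b ≤ binSize a B then 2 * b else b := by
        refine sum_lt_sum_of_nonempty hparts fun B hB => ?_
        split_ifs with h
        · exact hcov B hB h
        · omega
    _ ≤ (2 * welfare a b π + 1) * b := by
        simp only [sum_ite, sum_const, smul_eq_mul, not_le, welfare]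
        linarith

theorem stmt19_general (n : ℕ) (hn : 1 ≤ n) (a : Fin n → ℕ) (b : ℕ)
    (hab : ∀ j, a j < b)
    (π : Finpartition (univ : Finset (Fin n)))
    (hres : Reasonable a b π) (hsne : IsSNE a b π)
    (σ : Finpartition (univ : Finset (Fin n))) :
    welfare a b σ ≤ 2 * welfare a b π := by
  have hlt : welfare a b σ * b < (2 * welfare a b π + 1) * b :=
    (mul_welfare_le_sum a b σ).trans_lt
      (hres.sum_lt hn fun _ hB hcov => hsne.binSize_lt_two_mul hab hB hcov)
  exact Nat.lt_succ_iff.mp (Nat.lt_of_mul_lt_mul_right hlt)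

/-- for every reasonable SNE `π`, `OPT ≤ 2 p(π)`. -/
theorem stmt19 (n : ℕ) (hn : 1 ≤ n) (a : Fin n → ℕ) (b : ℕ)
    (ha : ∀ j, 0 < a j) (hab : ∀ j, a j < b)
    (π : Finpartition (univ : Finset (Fin n)))
    (hres : Reasonable a b π) (hsne : IsSNE a b π)
    (σ : Finpartition (univ : Finset (Fin n))) :
    welfare a b σ ≤ 2 * welfare a b π :=
  stmt19_general n hn a b hab π hres hsne σ
end
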